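/- Let β : ℝ → ℝ satisfy hypothesis (H_β) and let m > 0. The function g(v) = ψ'(ψ⁻¹(v)) − 1, defined for all v ∈ ℝ, is a nonnegative even function with g(0) = 0; it is nonincreasing on (−∞, 0], nondecreasing on [0, ∞), and convex on ℝ. -/

import Mathlib

open MeasureTheory Filter Set

/-- The integro-exponential change of variables `ψ(u) = ∫₀ᵘ exp(m ∫₀ˢ β(t) dt) ds`. -/
noncomputable def psi (β : ℝ → ℝ) (m : ℝ) (u : ℝ) : ℝ :=
  ∫ s in (0:ℝ)..u, Real.exp (m * ∫ t in (0:ℝ)..s, β t)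

/-- Its derivative `ψ'(u) = exp(m ∫₀ᵘ β(t) dt)`. -/
noncomputable def psi' (β : ℝ → ℝ) (m : ℝ) (u : ℝ) : ℝ :=
  Real.exp (m * ∫ t in (0:ℝ)..u, β t)

/-- The inverse function `ψ⁻¹` of `ψ`. -/
noncomputable def psiInv (β : ℝ → ℝ) (m : ℝ) : ℝ → ℝ :=
  Function.invFun (psi β m)

/-- The function `g(v) = ψ'(ψ⁻¹(v)) − 1`. -/
noncomputable def gFun (β : ℝ → ℝ) (m : ℝ) (v : ℝ) : ℝ :=
  psi' β m (psiInv β m v) - 1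

/-! Since `β` is odd and nondecreasing, `B(u) = ∫₀ᵘ β` is even, nonnegative and nondecreasing on
`[0, ∞)`. Hence `ψ' = exp (m B) ≥ 1` is even, and `ψ` is an odd increasing bijection of `ℝ`;
evenness, nonnegativity and monotonicity of `g = ψ' ∘ ψ⁻¹ - 1` follow. For convexity, the chain
rule and the inverse function rule give `g'(v) = ψ'(ψ⁻¹ v) · m β(ψ⁻¹ v) / ψ'(ψ⁻¹ v) = m β(ψ⁻¹ v)`,
a composition of nondecreasing functions. -/

section Parity

variable {f : ℝ → ℝ}

theorem intervalIntegral_zero_neg_of_odd (hf : ∀ x, f (-x) = -f x) (u : ℝ) :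
    ∫ x in (0:ℝ)..-u, f x = ∫ x in (0:ℝ)..u, f x := by
  have h := intervalIntegral.integral_comp_neg (a := 0) (b := u) f
  simp only [hf, intervalIntegral.integral_neg, neg_zero] at h
  rw [intervalIntegral.integral_symm 0 (-u)] at h
  linarith

theorem intervalIntegral_zero_neg_of_even (hf : ∀ x, f (-x) = f x) (u : ℝ) :
    ∫ x in (0:ℝ)..-u, f x = -∫ x in (0:ℝ)..u, f x := by
  have h := intervalIntegral.integral_comp_neg (a := 0) (b := u) f
  simp only [hf, neg_zero] at h
  rw [h, intervalIntegral.integral_symm]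

theorem nonneg_of_odd_of_monotone (hodd : ∀ x, f (-x) = -f x) (hmono : Monotone f) {x : ℝ}
    (hx : 0 ≤ x) : 0 ≤ f x := by
  have h0 : f 0 = 0 := by
    have h := hodd 0
    rw [neg_zero] at h
    linarith
  exact h0 ▸ hmono hx

theorem intervalIntegral_zero_nonneg_of_odd_of_monotone (hodd : ∀ x, f (-x) = -f x)
    (hmono : Monotone f) (u : ℝ) : 0 ≤ ∫ x in (0:ℝ)..u, f x := by
  have hpos : ∀ u, 0 ≤ u → 0 ≤ ∫ x in (0:ℝ)..u, f x := fun u hu =>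
    intervalIntegral.integral_nonneg hu fun x hx => nonneg_of_odd_of_monotone hodd hmono hx.1
  rcases le_total 0 u with hu | hu
  · exact hpos u hu
  · rw [← neg_neg u, intervalIntegral_zero_neg_of_odd hodd]
    exact hpos _ (neg_nonneg.2 hu)

theorem monotoneOn_intervalIntegral_zero_of_odd_of_monotone (hodd : ∀ x, f (-x) = -f x)
    (hmono : Monotone f) : MonotoneOn (fun u => ∫ x in (0:ℝ)..u, f x) (Ici 0) :=
  fun _ ha _ _ hab =>
    intervalIntegral.integral_mono_interval le_rfl ha hab
      (ae_restrict_of_forall_mem measurableSet_Ioc fun _ hx =>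
        nonneg_of_odd_of_monotone hodd hmono hx.1.le)
      hmono.intervalIntegrable

end Parity

variable {β : ℝ → ℝ} {m : ℝ}

theorem psi'_zero : psi' β m 0 = 1 := by simp [psi']

theorem psi'_neg (hodd : ∀ s, β (-s) = -β s) (u : ℝ) : psi' β m (-u) = psi' β m u := by
  rw [psi', psi', intervalIntegral_zero_neg_of_odd hodd]

theorem one_le_psi' (hodd : ∀ s, β (-s) = -β s) (hmono : Monotone β) (hm : 0 ≤ m) (u : ℝ) :
    1 ≤ psi' β m u :=
  Real.one_le_exp (mul_nonneg hm (intervalIntegral_zero_nonneg_of_odd_of_monotone hodd hmono u))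

theorem monotoneOn_psi' (hodd : ∀ s, β (-s) = -β s) (hmono : Monotone β) (hm : 0 ≤ m) :
    MonotoneOn (psi' β m) (Ici 0) := fun _ ha _ hb hab =>
  Real.exp_le_exp.2 <| mul_le_mul_of_nonneg_left
    (monotoneOn_intervalIntegral_zero_of_odd_of_monotone hodd hmono ha hb hab) hm

theorem hasDerivAt_psi' (hβ : Continuous β) (u : ℝ) :
    HasDerivAt (psi' β m) (psi' β m u * (m * β u)) u :=
  ((hβ.integral_hasStrictDerivAt 0 u).hasDerivAt.const_mul m).exp

theorem continuous_psi' (hβ : Continuous β) : Continuous (psi' β m) :=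
  continuous_iff_continuousAt.2 fun u => (hasDerivAt_psi' hβ u).continuousAt

theorem hasDerivAt_psi (hβ : Continuous β) (u : ℝ) : HasDerivAt (psi β m) (psi' β m u) u :=
  ((continuous_psi' hβ).integral_hasStrictDerivAt 0 u).hasDerivAt

theorem psi_zero : psi β m 0 = 0 := intervalIntegral.integral_same

theorem psi_neg (hodd : ∀ s, β (-s) = -β s) (u : ℝ) : psi β m (-u) = -psi β m u :=
  intervalIntegral_zero_neg_of_even (psi'_neg hodd) u

theorem sub_le_psi_sub (hβ : Continuous β) (hodd : ∀ s, β (-s) = -β s) (hmono : Monotone β)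
    (hm : 0 ≤ m) {a b : ℝ} (hab : a ≤ b) : b - a ≤ psi β m b - psi β m a := by
  have hint : ∀ a b, IntervalIntegrable (psi' β m) volume a b :=
    (continuous_psi' hβ).intervalIntegrable
  have hdiff : psi β m b - psi β m a = ∫ x in a..b, psi' β m x :=
    intervalIntegral.integral_interval_sub_left (hint 0 b) (hint 0 a)
  rw [hdiff]
  simpa using intervalIntegral.integral_mono_on hab intervalIntegrable_const (hint a b)
    fun x _ => one_le_psi' hodd hmono hm x

theorem strictMono_psi (hβ : Continuous β) (hodd : ∀ s, β (-s) = -β s) (hmono : Monotone β)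
    (hm : 0 ≤ m) : StrictMono (psi β m) := fun _ _ hab => by
  linarith [sub_le_psi_sub hβ hodd hmono hm hab.le]

theorem surjective_psi (hβ : Continuous β) (hodd : ∀ s, β (-s) = -β s) (hmono : Monotone β)
    (hm : 0 ≤ m) : Function.Surjective (psi β m) := by
  have hslope : ∀ {a b}, a ≤ b → b - a ≤ psi β m b - psi β m a := sub_le_psi_sub hβ hodd hmono hm
  refine (continuous_iff_continuousAt.2 fun u => (hasDerivAt_psi hβ u).continuousAt).surjective
    (tendsto_atTop_mono' _ ?_ tendsto_id) (tendsto_atBot_mono' _ ?_ tendsto_id)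
  · filter_upwards [eventually_ge_atTop 0] with u hu
    simpa [psi_zero] using hslope hu
  · filter_upwards [eventually_le_atBot 0] with u hu
    simpa [psi_zero] using hslope hu

theorem psi_psiInv (hβ : Continuous β) (hodd : ∀ s, β (-s) = -β s) (hmono : Monotone β)
    (hm : 0 ≤ m) (v : ℝ) : psi β m (psiInv β m v) = v :=
  Function.rightInverse_invFun (surjective_psi hβ hodd hmono hm) v

theorem psiInv_psi (hβ : Continuous β) (hodd : ∀ s, β (-s) = -β s) (hmono : Monotone β)
    (hm : 0 ≤ m) (u : ℝ) : psiInv β m (psi β m u) = u :=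
  Function.leftInverse_invFun (strictMono_psi hβ hodd hmono hm).injective u

theorem psiInv_zero (hβ : Continuous β) (hodd : ∀ s, β (-s) = -β s) (hmono : Monotone β)
    (hm : 0 ≤ m) : psiInv β m 0 = 0 := by
  simpa [psi_zero] using psiInv_psi hβ hodd hmono hm 0

theorem psiInv_neg (hβ : Continuous β) (hodd : ∀ s, β (-s) = -β s) (hmono : Monotone β)
    (hm : 0 ≤ m) (v : ℝ) : psiInv β m (-v) = -psiInv β m v := by
  conv_lhs => rw [← psi_psiInv hβ hodd hmono hm v, ← psi_neg hodd, psiInv_psi hβ hodd hmono hm]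

theorem monotone_psiInv (hβ : Continuous β) (hodd : ∀ s, β (-s) = -β s) (hmono : Monotone β)
    (hm : 0 ≤ m) : Monotone (psiInv β m) := fun a b hab => by
  rwa [← (strictMono_psi hβ hodd hmono hm).le_iff_le, psi_psiInv hβ hodd hmono hm,
    psi_psiInv hβ hodd hmono hm]

theorem hasDerivAt_psiInv (hβ : Continuous β) (hodd : ∀ s, β (-s) = -β s) (hmono : Monotone β)
    (hm : 0 ≤ m) (v : ℝ) : HasDerivAt (psiInv β m) (psi' β m (psiInv β m v))⁻¹ v := by
  have hcont : Continuous (psiInv β m) := (monotone_psiInv hβ hodd hmono hm).continuous_of_surjective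
    fun u => ⟨psi β m u, psiInv_psi hβ hodd hmono hm u⟩
  exact (hasDerivAt_psi hβ _).of_local_left_inverse hcont.continuousAt (Real.exp_pos _).ne'
    (.of_forall (psi_psiInv hβ hodd hmono hm))

theorem hasDerivAt_gFun (hβ : Continuous β) (hodd : ∀ s, β (-s) = -β s) (hmono : Monotone β)
    (hm : 0 ≤ m) (v : ℝ) : HasDerivAt (gFun β m) (m * β (psiInv β m v)) v := by
  have h := ((hasDerivAt_psi' (m := m) hβ _).sub_const 1).comp v (hasDerivAt_psiInv hβ hodd hmono hm v)
  have hne : psi' β m (psiInv β m v) ≠ 0 := (Real.exp_pos _).ne'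
  exact h.congr_deriv (by field_simp)

theorem gFun_nonneg (hodd : ∀ s, β (-s) = -β s) (hmono : Monotone β) (hm : 0 ≤ m) (v : ℝ) :
    0 ≤ gFun β m v :=
  sub_nonneg.2 (one_le_psi' hodd hmono hm _)

theorem gFun_neg (hβ : Continuous β) (hodd : ∀ s, β (-s) = -β s) (hmono : Monotone β)
    (hm : 0 ≤ m) (v : ℝ) : gFun β m (-v) = gFun β m v := by
  rw [gFun, gFun, psiInv_neg hβ hodd hmono hm, psi'_neg hodd]

theorem gFun_zero (hβ : Continuous β) (hodd : ∀ s, β (-s) = -β s) (hmono : Monotone β)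
    (hm : 0 ≤ m) : gFun β m 0 = 0 := by
  rw [gFun, psiInv_zero hβ hodd hmono hm, psi'_zero, sub_self]

theorem monotoneOn_gFun (hβ : Continuous β) (hodd : ∀ s, β (-s) = -β s) (hmono : Monotone β)
    (hm : 0 ≤ m) : MonotoneOn (gFun β m) (Ici 0) := fun a ha b hb hab => by
  have hinv := monotone_psiInv hβ hodd hmono hm
  have hinv0 := psiInv_zero hβ hodd hmono hm
  exact sub_le_sub_right (monotoneOn_psi' hodd hmono hm (hinv0 ▸ hinv ha) (hinv0 ▸ hinv hb)
    (hinv hab)) 1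

theorem antitoneOn_gFun (hβ : Continuous β) (hodd : ∀ s, β (-s) = -β s) (hmono : Monotone β)
    (hm : 0 ≤ m) : AntitoneOn (gFun β m) (Iic 0) := fun a ha b hb hab => by
  rw [← gFun_neg hβ hodd hmono hm a, ← gFun_neg hβ hodd hmono hm b]
  exact monotoneOn_gFun hβ hodd hmono hm (neg_nonneg.2 hb : 0 ≤ -b) (neg_nonneg.2 ha : 0 ≤ -a)
    (neg_le_neg hab)

theorem convexOn_gFun (hβ : Continuous β) (hodd : ∀ s, β (-s) = -β s) (hmono : Monotone β)
    (hm : 0 ≤ m) : ConvexOn ℝ univ (gFun β m) := by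
  have hderiv := hasDerivAt_gFun hβ hodd hmono hm
  refine Monotone.convexOn_univ_of_deriv (fun v => (hderiv v).differentiableAt) fun a b hab => ?_
  rw [(hderiv a).deriv, (hderiv b).deriv]
  exact mul_le_mul_of_nonneg_left (hmono (monotone_psiInv hβ hodd hmono hm hab)) hm

theorem stmt3_general (β : ℝ → ℝ) (m : ℝ) (hm : 0 < m)
    (hodd : ∀ s, β (-s) = -β s)
    (hlip : LocallyLipschitz β)
    (hmono : Monotone β) :
    (∀ v, 0 ≤ gFun β m v) ∧
    (∀ v, gFun β m (-v) = gFun β m v) ∧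
    gFun β m 0 = 0 ∧
    AntitoneOn (gFun β m) (Iic 0) ∧
    MonotoneOn (gFun β m) (Ici 0) ∧
    ConvexOn ℝ univ (gFun β m) := by
  have hβ := hlip.continuous
  exact ⟨gFun_nonneg hodd hmono hm.le, gFun_neg hβ hodd hmono hm.le, gFun_zero hβ hodd hmono hm.le,
    antitoneOn_gFun hβ hodd hmono hm.le, monotoneOn_gFun hβ hodd hmono hm.le,
    convexOn_gFun hβ hodd hmono hm.le⟩

theorem stmt3 (β : ℝ → ℝ) (m : ℝ) (hm : 0 < m)
    (hodd : ∀ s, β (-s) = -β s)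
    (hlip : LocallyLipschitz β)
    (hmono : Monotone β)
    (hsign : ∀ s, 0 ≤ β s * s)
    (htop : Tendsto β atTop atTop) :
    (∀ v, 0 ≤ gFun β m v) ∧
    (∀ v, gFun β m (-v) = gFun β m v) ∧
    gFun β m 0 = 0 ∧
    AntitoneOn (gFun β m) (Iic 0) ∧
    MonotoneOn (gFun β m) (Ici 0) ∧
    ConvexOn ℝ univ (gFun β m) :=
  stmt3_general β m hm hodd hlip hmono
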